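/- For every nonnegative integer n and complex a, and nonzero real x (a > 0), the identity ₃F₂(-n, a+ix, a-ix; a+1, a+1/2; 1) = (ia/x) · ₂F₁(-2n-1, a+ix; 2a; 2) holds, where both sides are terminating hypergeometric sums and i is the imaginary unit. -/

import Mathlib

open Finset Complex

/-- Pochhammer symbol `(a)_k = a(a+1)⋯(a+k-1)`. -/
noncomputable def poch (a : ℂ) (k : ℕ) : ℂ := ∏ j ∈ Finset.range k, (a + j)

/-- Terminating hypergeometric series `₃F₂(-n, A, B; C, D; z)`. -/
noncomputable def F32 (n : ℕ) (A B C D z : ℂ) : ℂ :=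
  ∑ k ∈ Finset.range (n + 1),
    poch (-(n : ℂ)) k * poch A k * poch B k / (poch C k * poch D k * (k.factorial : ℂ)) * z ^ k

/-- Terminating hypergeometric series `₂F₁(-m, A; C; z)`. -/
noncomputable def F21 (m : ℕ) (A C z : ℂ) : ℂ :=
  ∑ k ∈ Finset.range (m + 1),
    poch (-(m : ℂ)) k * poch A k / (poch C k * (k.factorial : ℂ)) * z ^ k

/-!
Write `A = a + ix`, `B = a - ix`, so `A + B = 2a` and `B - A = -2ix`. Clearing denominators,
`(2a)_{2n+1} · ₂F₁(-2n-1, A; 2a; 2)` becomes `G(2n+1)` with `G(m) = ∑ⱼ (-1)ʲ C(m,j) (A)ⱼ (B)ₘ₋ⱼ`: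
expand `2ᵏ = ∑ⱼ C(k,j)` and sum over `k` by Chu–Vandermonde. The sums `G(m)` obey the three-term
recurrence `G(m+2) = (B-A) G(m+1) + (m+1)(m+A+B) G(m)`, and so do, after splitting into even and
odd indices, the cleared ₃F₂'s `E_T(n) = (T)_{2n} · ₃F₂(-n, A, B; T/2, (T+1)/2; 1)`; induction gives
`G(2n) = E_{A+B}(n)` and `G(2n+1) = (B-A) E_{A+B+1}(n)`. The factor `B - A = -2ix` is what turns
`2a` into `ia/x`.
-/

theorem Finset.sum_range_choose_succ_mul_sub {R : Type*} [CommSemiring R] (f : ℕ → R) (n : ℕ) :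
    ∑ i ∈ range (n + 2), ((n + 1).choose i : R) * ((n + 1 - i : ℕ) * f i) =
      (n + 1) * ∑ i ∈ range (n + 1), (n.choose i : R) * f i := by
  rw [sum_range_succ, Nat.sub_self, Nat.cast_zero, zero_mul, mul_zero, add_zero, mul_sum]
  refine sum_congr rfl fun i _ => ?_
  rw [← mul_assoc, ← Nat.cast_mul, ← Nat.choose_mul_succ_eq]
  push_cast
  ring

theorem Finset.sum_range_choose_succ_mul_self {R : Type*} [CommSemiring R] (f : ℕ → R) (n : ℕ) :
    ∑ i ∈ range (n + 2), ((n + 1).choose i : R) * (i * f i) =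
      (n + 1) * ∑ i ∈ range (n + 1), (n.choose i : R) * f (i + 1) := by
  rw [sum_range_succ', Nat.cast_zero, zero_mul, mul_zero, add_zero, mul_sum]
  refine sum_congr rfl fun i _ => ?_
  rw [← mul_assoc, ← Nat.cast_succ, ← Nat.cast_mul, ← Nat.add_one_mul_choose_eq]
  push_cast
  ring

lemma poch_eq_eval_ascPochhammer (a : ℂ) (k : ℕ) : poch a k = (ascPochhammer ℂ k).eval a := by
  induction k with
  | zero => simp [poch]
  | succ k ih => rw [poch, prod_range_succ, ← poch, ih, ascPochhammer_succ_eval]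

@[simp] lemma poch_zero (a : ℂ) : poch a 0 = 1 := prod_range_zero _

@[simp] lemma poch_one (a : ℂ) : poch a 1 = a := by simp [poch]

lemma poch_succ (a : ℂ) (k : ℕ) : poch a (k + 1) = poch a k * (a + k) := prod_range_succ _ _

lemma poch_add (a : ℂ) (p q : ℕ) : poch a (p + q) = poch a p * poch (a + p) q := by
  simp only [poch, prod_range_add, Nat.cast_add, add_assoc]

lemma poch_succ' (a : ℂ) (k : ℕ) : poch a (k + 1) = a * poch (a + 1) k := by
  rw [add_comm, poch_add]
  simp [poch]

lemma poch_add_one_sub_poch (c : ℂ) (L : ℕ) :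
    poch (c + 1) (L + 1) - poch c (L + 1) = (L + 1) * poch (c + 1) L := by
  rw [poch_succ, poch_succ']
  ring

lemma mul_poch_add_one (c : ℂ) (L : ℕ) : c * poch (c + 1) L = poch c L * (c + L) := by
  rw [← poch_succ', poch_succ]

lemma poch_two_mul (c : ℂ) (k : ℕ) :
    poch (2 * c) (2 * k) = 4 ^ k * poch c k * poch (c + 1 / 2) k := by
  induction k with
  | zero => simp
  | succ k ih =>
    rw [show 2 * (k + 1) = 2 * k + 1 + 1 by ring, poch_succ, poch_succ, ih, poch_succ, poch_succ]
    push_cast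
    ring

lemma poch_neg_natCast (m k : ℕ) : poch (-m) k = (-1) ^ k * k.factorial * m.choose k := by
  rw [poch_eq_eval_ascPochhammer, ascPochhammer_eval_neg_eq_descPochhammer,
    descPochhammer_eval_eq_descFactorial, Nat.descFactorial_eq_factorial_mul_choose]
  push_cast
  ring

lemma poch_ofReal_ne_zero {r : ℝ} (hr : 0 < r) (k : ℕ) : poch r k ≠ 0 := by
  have : poch r k = ((∏ j ∈ range k, (r + j) : ℝ) : ℂ) := by simp [poch]
  rw [this, ofReal_ne_zero]
  exact (prod_pos fun j _ => by positivity).ne'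

lemma poch_ne_zero_of_le {a : ℂ} {m k : ℕ} (h : poch a m ≠ 0) (hk : k ≤ m) : poch a k ≠ 0 := by
  rw [← Nat.add_sub_cancel' hk, poch_add] at h
  exact left_ne_zero_of_mul h

/-- Chu–Vandermonde identity. -/
theorem poch_sub_eq_sum (B C : ℂ) (N : ℕ) :
    poch (C - B) N =
      ∑ l ∈ range (N + 1), (N.choose l : ℂ) * ((-1) ^ l * poch B l * poch (C + l) (N - l)) := by
  induction N generalizing C with
  | zero => simp
  | succ N ih =>
    rw [sum_choose_succ_mul (fun i j => (-1) ^ i * poch B i * poch (C + i) j), ← sum_add_distrib,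
      poch_succ', show C - B + 1 = C + 1 - B by ring, ih, mul_sum]
    refine sum_congr rfl fun l hl => ?_
    rw [Nat.sub_add_comm (mem_range_succ_iff.1 hl), poch_succ', poch_succ]
    push_cast
    rw [add_right_comm C 1, ← add_assoc]
    ring

/-- `(A + B)_m · ₂F₁(-m, A; A + B; 2)`, by `poch_mul_F21_two`. -/
noncomputable def clearedF21 (A B : ℂ) (m : ℕ) : ℂ :=
  ∑ j ∈ range (m + 1), (m.choose j : ℂ) * ((-1) ^ j * poch A j * poch B (m - j))

theorem poch_mul_F21 {m : ℕ} {C : ℂ} (A z : ℂ) (hC : poch C m ≠ 0) :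
    poch C m * F21 m A C z = ∑ k ∈ range (m + 1),
      (m.choose k : ℂ) * ((-1) ^ k * poch A k * poch (C + k) (m - k)) * z ^ k := by
  rw [F21, mul_sum]
  refine sum_congr rfl fun k hk => ?_
  have hkm : k ≤ m := mem_range_succ_iff.1 hk
  have hCk : poch C k ≠ 0 := poch_ne_zero_of_le hC hkm
  have hfac : (k.factorial : ℂ) ≠ 0 := Nat.cast_ne_zero.2 k.factorial_ne_zero
  rw [← Nat.add_sub_cancel' hkm, poch_add, Nat.add_sub_cancel_left, poch_neg_natCast]
  field_simp

theorem poch_mul_F21_two {m : ℕ} {C : ℂ} (A : ℂ) (hC : poch C m ≠ 0) :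
    poch C m * F21 m A C 2 = clearedF21 A (C - A) m := by
  have hexpand : ∀ k ∈ range (m + 1),
      (m.choose k : ℂ) * ((-1) ^ k * poch A k * poch (C + k) (m - k)) * 2 ^ k =
        ∑ j ∈ range (k + 1), (m.choose j : ℂ) * ((m - j).choose (k - j) *
          ((-1) ^ k * poch A k * poch (C + k) (m - k))) := by
    intro k _
    rw [show (2 : ℂ) ^ k = ((2 ^ k : ℕ) : ℂ) by push_cast; rfl, ← Nat.sum_range_choose k,
      Nat.cast_sum, mul_sum]
    refine sum_congr rfl fun j hj => ?_
    have hchoose : (m.choose k : ℂ) * k.choose j = m.choose j * (m - j).choose (k - j) := by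
      exact_mod_cast Nat.choose_mul (mem_range_succ_iff.1 hj)
    linear_combination ((-1) ^ k * poch A k * poch (C + k) (m - k)) * hchoose
  have hswap : ∀ k j, k ∈ range (m + 1) ∧ j ∈ range (k + 1) ↔
      k ∈ Ico j (m + 1) ∧ j ∈ range (m + 1) := by
    intro k j
    simp only [mem_range, mem_Ico]
    omega
  rw [poch_mul_F21 A 2 hC, sum_congr rfl hexpand, sum_comm' hswap, clearedF21]
  refine sum_congr rfl fun j hj => ?_
  have hjm : j ≤ m := mem_range_succ_iff.1 hj
  rw [sum_Ico_eq_sum_range, Nat.succ_sub hjm, show C - A = C + j - (A + j) by ring,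
    poch_sub_eq_sum, mul_sum, mul_sum]
  refine sum_congr rfl fun l _ => ?_
  rw [Nat.add_sub_cancel_left, Nat.sub_sub, poch_add]
  push_cast
  rw [← add_assoc]
  ring

noncomputable def clearedF21Weighted (A B : ℂ) (m : ℕ) : ℂ :=
  ∑ j ∈ range (m + 1), (m.choose j : ℂ) * ((m - 2 * j) * ((-1) ^ j * poch A j * poch B (m - j)))

lemma clearedF21_succ (A B : ℂ) (m : ℕ) :
    clearedF21 A B (m + 1) = (B - A) * clearedF21 A B m + clearedF21Weighted A B m := by
  rw [clearedF21, sum_choose_succ_mul (fun i j => (-1) ^ i * poch A i * poch B j),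
    clearedF21, clearedF21Weighted, mul_sum, ← sum_add_distrib, ← sum_add_distrib]
  refine sum_congr rfl fun j hj => ?_
  have hjm : j ≤ m := mem_range_succ_iff.1 hj
  rw [Nat.sub_add_comm hjm, poch_succ, poch_succ, Nat.cast_sub hjm]
  ring

lemma clearedF21Weighted_succ (A B : ℂ) (m : ℕ) :
    clearedF21Weighted A B (m + 1) = (m + 1) * (m + A + B) * clearedF21 A B m := by
  let g : ℕ → ℂ := fun j => (-1) ^ j * poch A j * poch B (m + 1 - j)
  have hweight : ∀ j ∈ range (m + 2), ((m + 1).choose j : ℂ) * ((((m + 1 : ℕ) : ℂ) - 2 * j) * g j) =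
      (m + 1).choose j * ((m + 1 - j : ℕ) * g j) - (m + 1).choose j * (j * g j) := by
    intro j hj
    rw [Nat.cast_sub (mem_range_succ_iff.1 hj)]
    push_cast
    ring
  rw [clearedF21Weighted, sum_congr rfl hweight, sum_sub_distrib, sum_range_choose_succ_mul_sub,
    sum_range_choose_succ_mul_self, clearedF21, mul_sum, mul_sum, mul_sum, ← sum_sub_distrib]
  refine sum_congr rfl fun j hj => ?_
  have hjm : j ≤ m := mem_range_succ_iff.1 hj
  simp only [g]
  rw [Nat.sub_add_comm hjm, Nat.add_sub_add_right, poch_succ, poch_succ, Nat.cast_sub hjm]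
  ring

lemma clearedF21_add_two (A B : ℂ) (m : ℕ) :
    clearedF21 A B (m + 2) =
      (B - A) * clearedF21 A B (m + 1) + (m + 1) * (m + A + B) * clearedF21 A B m := by
  rw [clearedF21_succ, clearedF21Weighted_succ]

/-- `(T)_{2n} · ₃F₂(-n, A, B; T/2, (T+1)/2; 1)`, by `poch_mul_F32`. -/
noncomputable def clearedF32 (A B T : ℂ) (n : ℕ) : ℂ :=
  ∑ k ∈ range (n + 1),
    (n.choose k : ℂ) * ((-4) ^ k * poch A k * poch B k * poch (T + 2 * k) (2 * (n - k)))

lemma clearedF32_add_one (A B T : ℂ) (n : ℕ) :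
    clearedF32 A B (T + 1) (n + 1) =
      clearedF32 A B T (n + 1) + (2 * n + 2) * (T + 2 * n + 1) * clearedF32 A B (T + 1) n := by
  have hterm : ∀ k ∈ range (n + 2), ((n + 1).choose k : ℂ) *
      ((-4) ^ k * poch A k * poch B k * poch (T + 1 + 2 * k) (2 * (n + 1 - k))) =
        (n + 1).choose k * ((-4) ^ k * poch A k * poch B k * poch (T + 2 * k) (2 * (n + 1 - k))) +
        (n + 1).choose k * ((n + 1 - k : ℕ) * (2 * (T + 2 * n + 1) *
          ((-4) ^ k * poch A k * poch B k * poch (T + 1 + 2 * k) (2 * (n - k))))) := by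
    intro k hk
    rcases (mem_range_succ_iff.1 hk).lt_or_eq with hkn | rfl
    · have hkn : k ≤ n := Nat.lt_succ_iff.1 hkn
      have hdiff := poch_add_one_sub_poch (T + 2 * k) (2 * (n - k) + 1)
      rw [poch_succ _ (2 * (n - k)), add_right_comm T,
        show 2 * (n - k) + 1 + 1 = 2 * (n + 1 - k) by omega] at hdiff
      push_cast [Nat.cast_sub hkn, Nat.cast_sub (by omega : k ≤ n + 1)] at hdiff ⊢
      linear_combination ((n + 1).choose k * ((-4) ^ k * poch A k * poch B k) : ℂ) * hdiff
    · simp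
  rw [clearedF32, sum_congr rfl hterm, sum_add_distrib, sum_range_choose_succ_mul_sub]
  congr 1
  rw [clearedF32, mul_sum, mul_sum]
  refine sum_congr rfl fun k _ => ?_
  ring

lemma clearedF32_succ (A B T : ℂ) (n : ℕ) :
    clearedF32 A B T (n + 1) = ∑ k ∈ range (n + 1), (n.choose k : ℂ) *
      (((T + 2 * k) * (T + 2 * k + 1) - 4 * (A + k) * (B + k)) *
        ((-4) ^ k * poch A k * poch B k * poch (T + 2 * k + 2) (2 * (n - k)))) := by
  rw [clearedF32,
    sum_choose_succ_mul fun i j => (-4) ^ i * poch A i * poch B i * poch (T + 2 * i) (2 * j),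
    ← sum_add_distrib]
  refine sum_congr rfl fun k hk => ?_
  have hpoch_two : poch (T + 2 * k) 2 = (T + 2 * k) * (T + 2 * k + 1) := by
    simp [poch, prod_range_succ]
  have hshift : T + 2 * ((k + 1 : ℕ) : ℂ) = T + 2 * k + 2 := by push_cast; ring
  rw [Nat.sub_add_comm (mem_range_succ_iff.1 hk), show 2 * (n - k + 1) = 2 + 2 * (n - k) by ring,
    poch_add, hpoch_two, Nat.cast_two, hshift, poch_succ A, poch_succ B]
  ring

lemma clearedF32_add_succ (A B : ℂ) (n : ℕ) :
    clearedF32 A B (A + B) (n + 1) = (B - A) ^ 2 * clearedF32 A B (A + B + 1) n +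
      (2 * n + 1) * (A + B + 2 * n) * clearedF32 A B (A + B) n := by
  have hstep := clearedF32_add_one A B (A + B - 1) n
  rw [sub_add_cancel] at hstep
  have hsum : clearedF32 A B (A + B - 1) (n + 1) =
      (B - A) ^ 2 * clearedF32 A B (A + B + 1) n - (A + B + 2 * n) * clearedF32 A B (A + B) n := by
    rw [clearedF32_succ, clearedF32, clearedF32, mul_sum, mul_sum, ← sum_sub_distrib]
    refine sum_congr rfl fun k hk => ?_
    have hkn : k ≤ n := mem_range_succ_iff.1 hk
    have hpoch := mul_poch_add_one (A + B + 2 * k) (2 * (n - k))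
    rw [add_right_comm _ _ (1 : ℂ)] at hpoch
    push_cast [Nat.cast_sub hkn] at hpoch
    rw [show A + B - 1 + 2 * (k : ℂ) + 2 = A + B + 1 + 2 * k by ring]
    linear_combination (-(n.choose k * ((-4) ^ k * poch A k * poch B k)) : ℂ) * hpoch
  linear_combination hstep + hsum

theorem clearedF21_even_odd (A B : ℂ) (n : ℕ) :
    clearedF21 A B (2 * n) = clearedF32 A B (A + B) n ∧
      clearedF21 A B (2 * n + 1) = (B - A) * clearedF32 A B (A + B + 1) n := by
  induction n with
  | zero => simp [clearedF21, clearedF32, sum_range_succ, sub_eq_add_neg]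
  | succ n ih =>
    have heven : clearedF21 A B (2 * (n + 1)) = clearedF32 A B (A + B) (n + 1) := by
      rw [mul_add_one, clearedF21_add_two, ih.1, ih.2, clearedF32_add_succ]
      push_cast
      ring
    refine ⟨heven, ?_⟩
    rw [show 2 * (n + 1) + 1 = 2 * n + 1 + 2 by ring, clearedF21_add_two,
      show 2 * n + 1 + 1 = 2 * (n + 1) by ring, heven, ih.2, clearedF32_add_one]
    push_cast
    ring

theorem poch_mul_F32 {n : ℕ} {c : ℂ} (A B : ℂ) (hc : poch (2 * c + 1) (2 * n) ≠ 0) :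
    poch (2 * c + 1) (2 * n) * F32 n A B (c + 1) (c + 1 / 2) 1 = clearedF32 A B (2 * c + 1) n := by
  rw [F32, mul_sum, clearedF32]
  refine sum_congr rfl fun k hk => ?_
  have hkn : k ≤ n := mem_range_succ_iff.1 hk
  have hsplit : poch (2 * c + 1) (2 * n) =
      poch (2 * c + 1) (2 * k) * poch (2 * c + 1 + 2 * k) (2 * (n - k)) := by
    rw [← Nat.cast_two, ← Nat.cast_mul, ← poch_add, ← mul_add, Nat.add_sub_cancel' hkn]
  have hdup : poch (2 * c + 1) (2 * k) = 4 ^ k * poch (c + 1 / 2) k * poch (c + 1) k := by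
    have := poch_two_mul (c + 1 / 2) k
    rwa [show 2 * (c + 1 / 2) = 2 * c + 1 by ring, show c + 1 / 2 + 1 / 2 = c + 1 by ring] at this
  have hk0 : poch (2 * c + 1) (2 * k) ≠ 0 := poch_ne_zero_of_le hc (by omega)
  rw [hdup] at hk0
  have hfac : (k.factorial : ℂ) ≠ 0 := Nat.cast_ne_zero.2 k.factorial_ne_zero
  have h1 : poch (c + 1 / 2) k ≠ 0 := right_ne_zero_of_mul (left_ne_zero_of_mul hk0)
  have h2 : poch (c + 1) k ≠ 0 := right_ne_zero_of_mul hk0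
  rw [hsplit, hdup, poch_neg_natCast, one_pow, mul_one, neg_pow (4 : ℂ)]
  generalize poch (c + 1 / 2) k = P at h1 ⊢
  generalize poch (c + 1) k = Q at h2 ⊢
  field_simp

/-- The identity
`₃F₂(-n, a+ix, a-ix; a+1, a+1/2; 1) = (ia/x)·₂F₁(-2n-1, a+ix; 2a; 2)`
for real `a > 0` and nonzero real `x`. -/
theorem F32_eq_F21_odd (n : ℕ) (a x : ℝ) (ha : 0 < a) (hx : x ≠ 0) :
    F32 n ((a : ℂ) + Complex.I * x) ((a : ℂ) - Complex.I * x) ((a : ℂ) + 1) ((a : ℂ) + 1 / 2) 1 =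
      Complex.I * a / x * F21 (2 * n + 1) ((a : ℂ) + Complex.I * x) (2 * a) 2 := by
  set A : ℂ := a + I * x
  set B : ℂ := a - I * x
  have hodd : poch (2 * a) (2 * n + 1) ≠ 0 := by
    exact_mod_cast poch_ofReal_ne_zero (by positivity : 0 < 2 * a) (2 * n + 1)
  have hsplit : poch (2 * a) (2 * n + 1) = 2 * a * poch (2 * a + 1) (2 * n) := poch_succ' _ _
  have heven : poch (2 * a + 1) (2 * n) ≠ 0 := right_ne_zero_of_mul (hsplit ▸ hodd)
  have h21 := poch_mul_F21_two A hodd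
  rw [show 2 * a - A = B by ring, (clearedF21_even_odd A B n).2, show A + B + 1 = 2 * a + 1 by ring,
    hsplit] at h21
  have h32 := poch_mul_F32 A B heven
  rw [show B - A = -2 * I * x by simp only [A, B]; ring] at h21
  apply mul_left_cancel₀ heven
  rw [h32, div_mul_eq_mul_div, mul_div_assoc', eq_div_iff (ofReal_ne_zero.2 hx)]
  linear_combination (-I / 2) * h21 + x * clearedF32 A B (2 * a + 1) n * I_sq
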